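/- Theorem 5.1 (two minimizers have equal normals along the connecting segment): Let u : Ω → ℝ be Lipschitz, let φ be a test function, and set v = u + φ. Suppose both u and v are minimizers for 𝔉. For ε ∈ ℝ set u_ε = u + ε(v − u) = u + εφ. Then for any pair of values ε₁, ε₂ ∈ [0,1] that are regular for u, φ, one has N(u_{ε₁})(x) = N(u_{ε₂})(x) for Lebesgue-a.e. x ∈ Ω ∖ (S(u_{ε₁}) ∪ S(u_{ε₂})). -/

import Mathlib

open MeasureTheory
open scoped RealInnerProductSpace ENNReal

/-!
Along the segment `u_ε = u + εφ` the energy `G(ε) = 𝔉(u_ε)` is the integral of the functions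
`ε ↦ |∇u + ε∇φ + F⃗| + H (u + εφ)`, which are convex in `ε`; hence `G` is convex. Being minimal at
both `ε = 0` and `ε = 1`, `G` is constant on `[0, 1]`. For `ε₁, ε₂ ∈ [0, 1]` the midpoint
convexity inequality of the integrand therefore integrates to an equality, so it is an equality
a.e.: `|a + b| = |a| + |b|` for `a = ∇u_{ε₁} + F⃗` and `b = ∇u_{ε₂} + F⃗`. As the Euclidean norm is
strictly convex, `a` and `b` lie on the same ray, i.e. have the same normalization.
-/

/-- The vector field `∇u + ε ∇φ + F⃗` (the a.e. gradient of `u_ε = u + ε φ`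
shifted by `F⃗`). -/
noncomputable def gradShift {m : ℕ} (u φ : EuclideanSpace ℝ (Fin m) → ℝ)
    (F : EuclideanSpace ℝ (Fin m) → EuclideanSpace ℝ (Fin m)) (ε : ℝ)
    (x : EuclideanSpace ℝ (Fin m)) : EuclideanSpace ℝ (Fin m) :=
  gradient u x + ε • gradient φ x + F x

/-- The singular set `S(u_ε) = {x ∈ Ω : ∇u_ε + F⃗ = 0}` of `u_ε = u + ε φ`. -/
def singSet {m : ℕ} (Ω : Set (EuclideanSpace ℝ (Fin m)))
    (u φ : EuclideanSpace ℝ (Fin m) → ℝ)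
    (F : EuclideanSpace ℝ (Fin m) → EuclideanSpace ℝ (Fin m)) (ε : ℝ) :
    Set (EuclideanSpace ℝ (Fin m)) :=
  {x ∈ Ω | gradShift u φ F ε x = 0}

/-- `u` is a minimizer for the generalized p-area functional
`𝔉(v) = ∫_Ω (|∇v + F⃗| + H v)`: for every test function `ψ`
(a Lipschitz function with compact support contained in `Ω`) one has `𝔉(u) ≤ 𝔉(u + ψ)`. -/
def IsPMinimizer {m : ℕ} (Ω : Set (EuclideanSpace ℝ (Fin m)))
    (F : EuclideanSpace ℝ (Fin m) → EuclideanSpace ℝ (Fin m))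
    (H : EuclideanSpace ℝ (Fin m) → ℝ) (u : EuclideanSpace ℝ (Fin m) → ℝ) : Prop :=
  ∀ ψ : EuclideanSpace ℝ (Fin m) → ℝ, (∃ K, LipschitzWith K ψ) →
    HasCompactSupport ψ → tsupport ψ ⊆ Ω →
    (∫ x in Ω, (‖gradient u x + F x‖ + H x * u x)) ≤
      ∫ x in Ω, (‖gradient u x + gradient ψ x + F x‖ + H x * (u x + ψ x))

section Gradient

variable {E : Type*} [NormedAddCommGroup E] [InnerProductSpace ℝ E] [CompleteSpace E]
  {f g : E → ℝ} {x : E}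

theorem gradient_fun_add (hf : DifferentiableAt ℝ f x) (hg : DifferentiableAt ℝ g x) :
    gradient (fun y => f y + g y) x = gradient f x + gradient g x := by
  simp only [gradient, fderiv_fun_add hf hg, map_add]

theorem gradient_const_mul (hg : DifferentiableAt ℝ g x) (c : ℝ) :
    gradient (fun y => c * g y) x = c • gradient g x := by
  simp only [gradient, fderiv_const_mul hg, map_smul]

theorem norm_gradient_le_of_lipschitzOn {s : Set E} {K : NNReal} (hs : s ∈ nhds x)
    (hf : LipschitzOnWith K f s) : ‖gradient f x‖ ≤ K := by
  rw [gradient, LinearIsometryEquiv.norm_map]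
  exact norm_fderiv_le_of_lipschitzOn ℝ hs hf

theorem norm_gradient_le_of_lipschitz {K : NNReal} (hf : LipschitzWith K f) :
    ‖gradient f x‖ ≤ K := by
  rw [gradient, LinearIsometryEquiv.norm_map]
  exact norm_fderiv_le_of_lipschitz ℝ hf

theorem measurable_gradient [MeasurableSpace E] [BorelSpace E] (f : E → ℝ) :
    Measurable (gradient f) :=
  (InnerProductSpace.toDual ℝ E).symm.continuous.measurable.comp (measurable_fderiv ℝ f)

end Gradient

theorem convexOn_integral {α E : Type*} [MeasurableSpace α] {μ : Measure α} [AddCommGroup E]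
    [Module ℝ E] {s : Set E} (hs : Convex ℝ s) {g : E → α → ℝ}
    (hg : ∀ x, ConvexOn ℝ s (g · x)) (hint : ∀ t ∈ s, Integrable (g t) μ) :
    ConvexOn ℝ s fun t => ∫ x, g t x ∂μ := by
  refine ⟨hs, fun a ha b hb p q hp hq hpq => ?_⟩
  calc ∫ x, g (p • a + q • b) x ∂μ ≤ ∫ x, (p * g a x + q * g b x) ∂μ :=
        integral_mono (hint _ (hs ha hb hp hq hpq))
          (((hint a ha).const_mul p).add ((hint b hb).const_mul q))
          fun x => (hg x).2 ha hb hp hq hpq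
    _ = p • ∫ x, g a x ∂μ + q • ∫ x, g b x ∂μ := by
        rw [integral_add ((hint a ha).const_mul p) ((hint b hb).const_mul q),
          integral_const_mul, integral_const_mul, smul_eq_mul, smul_eq_mul]

theorem ConvexOn.eq_of_isMinOn_Icc_endpoints {f : ℝ → ℝ} {a b : ℝ}
    (hf : ConvexOn ℝ (Set.Icc a b) f) (ha : IsMinOn f (Set.Icc a b) a)
    (hb : IsMinOn f (Set.Icc a b) b) :
    ∀ x ∈ Set.Icc a b, f x = f a := by
  intro x hx
  have hab : a ≤ b := hx.1.trans hx.2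
  have hle := hf.le_on_segment (Set.left_mem_Icc.2 hab) (Set.right_mem_Icc.2 hab)
    (by rwa [segment_eq_Icc hab])
  have hba : f b ≤ f a := hb (Set.left_mem_Icc.2 hab)
  exact le_antisymm (by rwa [max_eq_left hba] at hle) (ha hx)

theorem ae_eq_midpoint_of_integral_eq {α E : Type*} [MeasurableSpace α] {μ : Measure α}
    [AddCommGroup E] [Module ℝ E] {S : Set E} (hS : Convex ℝ S) {g : E → α → ℝ}
    (hg : ∀ x, ConvexOn ℝ S (g · x)) (hint : ∀ t ∈ S, Integrable (g t) μ) {s t : E}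
    (hs : s ∈ S) (ht : t ∈ S)
    (heq : ∫ x, g (midpoint ℝ s t) x ∂μ = (∫ x, g s x ∂μ + ∫ x, g t x ∂μ) / 2) :
    ∀ᵐ x ∂μ, g (midpoint ℝ s t) x = (g s x + g t x) / 2 := by
  have hmid : midpoint ℝ s t = (1 / 2 : ℝ) • s + (1 / 2 : ℝ) • t := by
    rw [midpoint_eq_smul_add, smul_add, invOf_eq_inv, one_div]
  have hle : ∀ x, g (midpoint ℝ s t) x ≤ (g s x + g t x) / 2 := fun x => by
    have := (hg x).2 hs ht (by norm_num) (by norm_num) (add_halves 1)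
    rw [hmid]
    linarith [smul_eq_mul (1 / 2 : ℝ) (g s x), smul_eq_mul (1 / 2 : ℝ) (g t x)]
  have hint' : Integrable (fun x => (g s x + g t x) / 2) μ :=
    ((hint s hs).add (hint t ht)).div_const 2
  refine (integral_eq_iff_of_ae_le (hint _ (hS.midpoint_mem hs ht)) hint'
    (Filter.Eventually.of_forall hle)).1 ?_
  rw [heq, integral_div, integral_add (hint s hs) (hint t ht)]

theorem LipschitzOnWith.integrableOn_of_isBounded {X : Type*} [PseudoMetricSpace X]
    [MeasurableSpace X] [OpensMeasurableSpace X] {μ : Measure X} {f : X → ℝ} {K : NNReal}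
    {s : Set X} (hf : LipschitzOnWith K f s) (hs : Bornology.IsBounded s)
    (hsm : MeasurableSet s) (hμs : μ s < ∞) : IntegrableOn f s μ := by
  obtain ⟨g, hg, hfg⟩ := hf.extend_real
  obtain ⟨C, hC⟩ := isBounded_iff_forall_norm_le.1 (hg.isBounded_image hs)
  refine IntegrableOn.of_bound hμs (hf.continuousOn.aestronglyMeasurable hsm) C ?_
  filter_upwards [ae_restrict_mem hsm] with x hx
  rw [hfg hx]
  exact hC _ (Set.mem_image_of_mem g hx)

theorem ae_inv_norm_smul_eq_of_ae_sameRay {α E : Type*} [MeasurableSpace α] {μ : Measure α}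
    [NormedAddCommGroup E] [NormedSpace ℝ E] {s : Set α} {v w : α → E}
    (hv : AEStronglyMeasurable v (μ.restrict s)) (hw : AEStronglyMeasurable w (μ.restrict s))
    (h : ∀ᵐ x ∂μ.restrict s, SameRay ℝ (v x) (w x)) :
    ∀ᵐ x ∂μ.restrict (s \ ({x ∈ s | v x = 0} ∪ {x ∈ s | w x = 0})),
      ‖v x‖⁻¹ • v x = ‖w x‖⁻¹ • w x := by
  have hZ : NullMeasurableSet {x | v x ≠ 0 ∧ w x ≠ 0} (μ.restrict s) :=
    (hv.nullMeasurableSet_eq_fun aestronglyMeasurable_const).compl.inter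
      (hw.nullMeasurableSet_eq_fun aestronglyMeasurable_const).compl
  have hset : s \ ({x ∈ s | v x = 0} ∪ {x ∈ s | w x = 0}) = {x | v x ≠ 0 ∧ w x ≠ 0} ∩ s := by
    ext x
    by_cases hx : x ∈ s <;> simp [hx]
  rw [hset, ← Measure.restrict_restrict₀ hZ]
  filter_upwards [ae_restrict_mem₀ hZ, ae_restrict_of_ae h] with x ⟨hvx, hwx⟩ hray
  exact (sameRay_iff_inv_norm_smul_eq_of_ne hvx hwx).1 hray

/-- The integrand of `𝔉(u + εφ)` at the points where `u` and `φ` are differentiable. -/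
noncomputable def pAreaIntegrand {m : ℕ} (u φ : EuclideanSpace ℝ (Fin m) → ℝ)
    (F : EuclideanSpace ℝ (Fin m) → EuclideanSpace ℝ (Fin m))
    (H : EuclideanSpace ℝ (Fin m) → ℝ) (ε : ℝ) (x : EuclideanSpace ℝ (Fin m)) : ℝ :=
  ‖gradShift u φ F ε x‖ + H x * (u x + ε * φ x)

section PArea

variable {m : ℕ} {Ω : Set (EuclideanSpace ℝ (Fin m))} {u φ : EuclideanSpace ℝ (Fin m) → ℝ}
  {F : EuclideanSpace ℝ (Fin m) → EuclideanSpace ℝ (Fin m)} {H : EuclideanSpace ℝ (Fin m) → ℝ}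

theorem gradShift_add_smul_add_smul {p q : ℝ} (hpq : p + q = 1) (a b : ℝ)
    (x : EuclideanSpace ℝ (Fin m)) :
    gradShift u φ F (p * a + q * b) x = p • gradShift u φ F a x + q • gradShift u φ F b x := by
  obtain rfl : q = 1 - p := by linarith
  simp only [gradShift]
  module

theorem convexOn_pAreaIntegrand (x : EuclideanSpace ℝ (Fin m)) :
    ConvexOn ℝ Set.univ (pAreaIntegrand u φ F H · x) := by
  refine ⟨convex_univ, fun a _ b _ p q hp hq hpq => ?_⟩
  have hnorm : ‖gradShift u φ F (p * a + q * b) x‖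
      ≤ p * ‖gradShift u φ F a x‖ + q * ‖gradShift u φ F b x‖ := by
    rw [gradShift_add_smul_add_smul hpq]
    refine (norm_add_le _ _).trans_eq ?_
    rw [norm_smul, norm_smul, Real.norm_of_nonneg hp, Real.norm_of_nonneg hq]
  have hlin : H x * (u x + (p * a + q * b) * φ x)
      = p * (H x * (u x + a * φ x)) + q * (H x * (u x + b * φ x)) := by
    obtain rfl : q = 1 - p := by linarith
    ring
  simp only [pAreaIntegrand, smul_eq_mul]
  linarith

theorem sameRay_of_pAreaIntegrand_midpoint {s t : ℝ} {x : EuclideanSpace ℝ (Fin m)}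
    (h : pAreaIntegrand u φ F H (midpoint ℝ s t) x
      = (pAreaIntegrand u φ F H s x + pAreaIntegrand u φ F H t x) / 2) :
    SameRay ℝ (gradShift u φ F s x) (gradShift u φ F t x) := by
  have hmid : midpoint ℝ s t = 1 / 2 * s + 1 / 2 * t := by
    rw [midpoint_eq_smul_add, invOf_eq_inv, smul_eq_mul]
    ring
  have hgrad : gradShift u φ F (midpoint ℝ s t) x
      = (1 / 2 : ℝ) • (gradShift u φ F s x + gradShift u φ F t x) := by
    rw [hmid, gradShift_add_smul_add_smul (add_halves 1), smul_add]
  have hlin : H x * (u x + midpoint ℝ s t * φ x)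
      = (H x * (u x + s * φ x) + H x * (u x + t * φ x)) / 2 := by
    rw [hmid]
    ring
  simp only [pAreaIntegrand, hgrad, hlin, norm_smul] at h
  rw [sameRay_iff_norm_add]
  norm_num at h
  linarith

theorem aestronglyMeasurable_gradShift {μ : Measure (EuclideanSpace ℝ (Fin m))}
    (hF : AEStronglyMeasurable F μ) (ε : ℝ) : AEStronglyMeasurable (gradShift u φ F ε) μ :=
  ((measurable_gradient u).add ((measurable_gradient φ).const_smul ε)).aestronglyMeasurable.add hF

theorem norm_gradShift_le {Ku Kφ : NNReal} {x : EuclideanSpace ℝ (Fin m)} (hx : Ω ∈ nhds x)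
    (hu : LipschitzOnWith Ku u Ω) (hφ : LipschitzWith Kφ φ) (ε : ℝ) :
    ‖gradShift u φ F ε x‖ ≤ Ku + |ε| * Kφ + ‖F x‖ := by
  have hu' := norm_gradient_le_of_lipschitzOn hx hu
  have hφ' : ‖ε • gradient φ x‖ ≤ |ε| * Kφ := by
    rw [norm_smul, Real.norm_eq_abs]
    exact mul_le_mul_of_nonneg_left (norm_gradient_le_of_lipschitz hφ) (abs_nonneg ε)
  calc ‖gradShift u φ F ε x‖ ≤ ‖gradient u x‖ + ‖ε • gradient φ x‖ + ‖F x‖ :=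
        (norm_add_le _ _).trans (add_le_add_left (norm_add_le _ _) _)
    _ ≤ Ku + |ε| * Kφ + ‖F x‖ := by gcongr

theorem integrableOn_pAreaIntegrand (hΩ : IsOpen Ω) (hΩb : Bornology.IsBounded Ω)
    (hF : IntegrableOn F Ω) (hH : MemLp H ⊤ (volume.restrict Ω)) {Ku Kφ : NNReal}
    (hu : LipschitzOnWith Ku u Ω) (hφ : LipschitzWith Kφ φ) (ε : ℝ) :
    IntegrableOn (pAreaIntegrand u φ F H ε) Ω := by
  have hΩm := hΩ.measurableSet
  have hnorm : IntegrableOn (fun x => ‖gradShift u φ F ε x‖) Ω := by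
    have hbound : IntegrableOn (fun x => (Ku + |ε| * Kφ : ℝ) + ‖F x‖) Ω :=
      (integrableOn_const hΩb.measure_lt_top.ne).add hF.norm
    refine hbound.mono'
      (aestronglyMeasurable_gradShift hF.aestronglyMeasurable ε).norm ?_
    filter_upwards [ae_restrict_mem hΩm] with x hx
    rw [norm_norm]
    exact norm_gradShift_le (hΩ.mem_nhds hx) hu hφ ε
  have hlin : IntegrableOn (fun x => u x + ε * φ x) Ω :=
    (hu.integrableOn_of_isBounded hΩb hΩm hΩb.measure_lt_top).add
      ((hφ.lipschitzOnWith.integrableOn_of_isBounded hΩb hΩm hΩb.measure_lt_top).const_mul ε)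
  exact hnorm.add (hlin.mul_of_top_right hH)

theorem integral_pAreaIntegrand_le_of_isPMinimizer (hΩ : IsOpen Ω) {Ku Kφ : NNReal}
    (hu : LipschitzOnWith Ku u Ω) (hφ : LipschitzWith Kφ φ) (hφsupp : HasCompactSupport φ)
    (hφΩ : tsupport φ ⊆ Ω) {s : ℝ} (hmin : IsPMinimizer Ω F H (fun x => u x + s * φ x))
    (t : ℝ) :
    ∫ x in Ω, pAreaIntegrand u φ F H s x ≤ ∫ x in Ω, pAreaIntegrand u φ F H t x := by
  have hdiff : ∀ᵐ x ∂volume.restrict Ω, DifferentiableAt ℝ u x ∧ DifferentiableAt ℝ φ x := by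
    filter_upwards [hu.ae_differentiableWithinAt hΩ.measurableSet,
      ae_restrict_mem hΩ.measurableSet, ae_restrict_of_ae hφ.ae_differentiableAt] with x hux hx hφx
    exact ⟨hux.differentiableAt (hΩ.mem_nhds hx), hφx⟩
  have htest := hmin (fun x => (t - s) * φ x) ⟨_, (lipschitzWith_smul (t - s)).comp hφ⟩
    hφsupp.mul_left (tsupport_mul_subset_right.trans hφΩ)
  convert htest using 1 <;> refine integral_congr_ae ?_ <;>
    filter_upwards [hdiff] with x ⟨hux, hφx⟩ <;>
    simp only [pAreaIntegrand, gradShift, gradient_fun_add hux (hφx.const_mul s),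
      gradient_const_mul hφx]
  congr 2
  · module
  · ring

end PArea

theorem normals_agree_of_two_minimizers_general {m : ℕ}
    (Ω : Set (EuclideanSpace ℝ (Fin m)))
    (hΩopen : IsOpen Ω) (hΩbdd : Bornology.IsBounded Ω)
    (F : EuclideanSpace ℝ (Fin m) → EuclideanSpace ℝ (Fin m))
    (hF : IntegrableOn F Ω volume)
    (H : EuclideanSpace ℝ (Fin m) → ℝ)
    (hH : MemLp H ⊤ (volume.restrict Ω))
    (u : EuclideanSpace ℝ (Fin m) → ℝ) (hu : ∃ K, LipschitzOnWith K u Ω)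
    (φ : EuclideanSpace ℝ (Fin m) → ℝ) (hφ : ∃ K, LipschitzWith K φ)
    (hφsupp : HasCompactSupport φ) (hφΩ : tsupport φ ⊆ Ω)
    (humin : IsPMinimizer Ω F H u)
    (hvmin : IsPMinimizer Ω F H (fun x => u x + φ x))
    (ε₁ ε₂ : ℝ) (hε₁ : ε₁ ∈ Set.Icc (0 : ℝ) 1) (hε₂ : ε₂ ∈ Set.Icc (0 : ℝ) 1) :
    ∀ᵐ x ∂(volume.restrict (Ω \ (singSet Ω u φ F ε₁ ∪ singSet Ω u φ F ε₂))),
      ‖gradShift u φ F ε₁ x‖⁻¹ • gradShift u φ F ε₁ x =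
        ‖gradShift u φ F ε₂ x‖⁻¹ • gradShift u φ F ε₂ x := by
  obtain ⟨Ku, hKu⟩ := hu
  obtain ⟨Kφ, hKφ⟩ := hφ
  have hint := integrableOn_pAreaIntegrand hΩopen hΩbdd hF hH hKu hKφ
  have hconv (x) : ConvexOn ℝ (Set.Icc 0 1) (pAreaIntegrand u φ F H · x) :=
    (convexOn_pAreaIntegrand x).subset (Set.subset_univ _) (convex_Icc 0 1)
  have hle {s : ℝ} (hs : IsPMinimizer Ω F H fun x => u x + s * φ x) :=
    integral_pAreaIntegrand_le_of_isPMinimizer hΩopen hKu hKφ hφsupp hφΩ hs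
  have hG := convexOn_integral (convex_Icc 0 1) hconv fun ε _ => hint ε
  have hconst := hG.eq_of_isMinOn_Icc_endpoints (fun ε _ => hle (by simpa using humin) ε)
    (fun ε _ => hle (by simpa using hvmin) ε)
  have hmid := ae_eq_midpoint_of_integral_eq (convex_Icc 0 1) hconv (fun ε _ => hint ε) hε₁ hε₂
    (by rw [hconst _ ((convex_Icc 0 1).midpoint_mem hε₁ hε₂), hconst _ hε₁, hconst _ hε₂]; ring)
  exact ae_inv_norm_smul_eq_of_ae_sameRay
    (aestronglyMeasurable_gradShift hF.aestronglyMeasurable ε₁)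
    (aestronglyMeasurable_gradShift hF.aestronglyMeasurable ε₂)
    (hmid.mono fun x => sameRay_of_pAreaIntegrand_midpoint)

/-- **Theorem 5.1**: if `u` and `v = u + φ` are both minimizers for `𝔉`, then for any
pair of regular values `ε₁, ε₂ ∈ [0,1]`, the unit normals `N(u_{ε₁})` and `N(u_{ε₂})`
agree a.e. on `Ω ∖ (S(u_{ε₁}) ∪ S(u_{ε₂}))`. -/
theorem normals_agree_of_two_minimizers {m : ℕ} (hm : 1 ≤ m)
    (Ω : Set (EuclideanSpace ℝ (Fin m)))
    (hΩopen : IsOpen Ω) (hΩbdd : Bornology.IsBounded Ω)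
    (hΩne : Ω.Nonempty) (hΩconn : IsConnected Ω)
    (F : EuclideanSpace ℝ (Fin m) → EuclideanSpace ℝ (Fin m))
    (hF : IntegrableOn F Ω volume)
    (H : EuclideanSpace ℝ (Fin m) → ℝ)
    (hH : MemLp H ⊤ (volume.restrict Ω))
    (u : EuclideanSpace ℝ (Fin m) → ℝ) (hu : ∃ K, LipschitzOnWith K u Ω)
    (φ : EuclideanSpace ℝ (Fin m) → ℝ) (hφ : ∃ K, LipschitzWith K φ)
    (hφsupp : HasCompactSupport φ) (hφΩ : tsupport φ ⊆ Ω)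
    (humin : IsPMinimizer Ω F H u)
    (hvmin : IsPMinimizer Ω F H (fun x => u x + φ x))
    (ε₁ ε₂ : ℝ) (hε₁ : ε₁ ∈ Set.Icc (0 : ℝ) 1) (hε₂ : ε₂ ∈ Set.Icc (0 : ℝ) 1)
    (hreg₁ : volume (singSet Ω u φ F ε₁ ∩ {x | gradient φ x ≠ 0}) = 0)
    (hreg₂ : volume (singSet Ω u φ F ε₂ ∩ {x | gradient φ x ≠ 0}) = 0) :
    ∀ᵐ x ∂(volume.restrict (Ω \ (singSet Ω u φ F ε₁ ∪ singSet Ω u φ F ε₂))),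
      ‖gradShift u φ F ε₁ x‖⁻¹ • gradShift u φ F ε₁ x =
        ‖gradShift u φ F ε₂ x‖⁻¹ • gradShift u φ F ε₂ x :=
  normals_agree_of_two_minimizers_general Ω hΩopen hΩbdd F hF H hH u hu φ hφ hφsupp hφΩ humin hvmin
    ε₁ ε₂ hε₁ hε₂
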